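/- Let X ⊆ 𝒜^{ℤ^d} be a subshift, f ∈ SV_d(X), Λ ⊆ ℤ^d finite nonempty, ω ∈ 𝒜^Λ and x ∈ X. Then the limit lim_{n→∞} e^{f_n(ω x_{Λ^c})} 1{ω x_{Λ^c} ∈ X} / Σ_{η∈𝒜^Λ} e^{f_n(η x_{Λ^c})} 1{η x_{Λ^c} ∈ X} exists and is a nonnegative real number. It equals 0 when ω x_{Λ^c} ∉ X, and when ω x_{Λ^c} ∈ X it equals 1 / Σ_{η∈𝒜^Λ} e^{φ_f(ω x_{Λ^c}, η x_{Λ^c})} 1{η x_{Λ^c} ∈ X} > 0. -/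

import Mathlib

open MeasureTheory Filter Topology

/-- The full shift configuration space `𝒜^{ℤ^d}`. -/
abbrev Config (d : ℕ) (A : Type*) := (Fin d → ℤ) → A

/-- The shift action of `ℤ^d`: `(T^k x)_i = x_{i+k}`. -/
def shift {d : ℕ} {A : Type*} (k : Fin d → ℤ) (x : Config d A) : Config d A :=
  fun i => x (i + k)

/-- The ℓ∞ norm of a lattice point, `‖k‖_∞ = max_i |k_i|`. -/
def normInf {d : ℕ} (k : Fin d → ℤ) : ℕ :=
  Finset.univ.sup fun i => (k i).natAbs

/-- The box `Λ_N = {k : ‖k‖_∞ ≤ N}` as a finset. -/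
noncomputable def boxF (d N : ℕ) : Finset (Fin d → ℤ) :=
  Finset.Icc (fun _ => -(N : ℤ)) (fun _ => (N : ℤ))

/-- The `n`-th variation of `f` on a subshift `X`:
`δ_n(f) = sup {|f x - f y| : x, y ∈ X, x_{Λ_n} = y_{Λ_n}}`. -/
noncomputable def deltaVar {d : ℕ} {A : Type*} (X : Set (Config d A))
    (f : Config d A → ℝ) (n : ℕ) : ℝ :=
  sSup {r : ℝ | ∃ x ∈ X, ∃ y ∈ X,
    (∀ k : Fin d → ℤ, normInf k ≤ n → x k = y k) ∧ r = |f x - f y|}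

/-- `f` is bounded on `X`. -/
def BoundedOn {d : ℕ} {A : Type*} (X : Set (Config d A)) (f : Config d A → ℝ) : Prop :=
  ∃ C : ℝ, ∀ x ∈ X, |f x| ≤ C

/-- Membership in `SV_d(X)`: bounded with `Σ_{n ≥ 1} n^{d-1} δ_n(f) < ∞`. -/
def MemSV (d : ℕ) {A : Type*} (X : Set (Config d A)) (f : Config d A → ℝ) : Prop :=
  BoundedOn X f ∧ Summable fun n : ℕ => ((n : ℝ) + 1) ^ (d - 1) * deltaVar X f (n + 1)

/-- The sup norm of `f` over `X`. -/
noncomputable def supNormOn {d : ℕ} {A : Type*} (X : Set (Config d A))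
    (f : Config d A → ℝ) : ℝ :=
  sSup {r : ℝ | ∃ x ∈ X, r = |f x|}

/-- The `SV_d` norm: `‖f‖_{SV_d} = ‖f‖_∞ + Σ_{n ≥ 1} n^{d-1} δ_n(f)`. -/
noncomputable def svNorm (d : ℕ) {A : Type*} (X : Set (Config d A))
    (f : Config d A → ℝ) : ℝ :=
  supNormOn X f + ∑' n : ℕ, ((n : ℝ) + 1) ^ (d - 1) * deltaVar X f (n + 1)

/-- The Gibbs relation `𝔗`: pairs of points of `X` that agree outside a finite set. -/
def gibbsRel {d : ℕ} {A : Type*} (X : Set (Config d A)) :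
    Set (Config d A × Config d A) :=
  {p | p.1 ∈ X ∧ p.2 ∈ X ∧ ∃ Λ : Finset (Fin d → ℤ), ∀ k ∉ Λ, p.1 k = p.2 k}

/-- The cocycle `φ_f(x,y) = Σ_{k ∈ ℤ^d} (f(T^k y) - f(T^k x))` (unordered sum). -/
noncomputable def phiF {d : ℕ} {A : Type*} (f : Config d A → ℝ)
    (x y : Config d A) : ℝ :=
  ∑' k : Fin d → ℤ, (f (shift k y) - f (shift k x))

/-- Membership in `𝓕(X)`: homeomorphisms of `X` changing only finitely many coordinates,
uniformly. -/
def memF {d : ℕ} {A : Type*} [TopologicalSpace A] (X : Set (Config d A))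
    (φ : ↥X ≃ₜ ↥X) : Prop :=
  ∃ n : ℕ, 1 ≤ n ∧ ∀ x : ↥X, ∀ k : Fin d → ℤ, n < normInf k → (φ x).1 k = x.1 k

/-- `𝓕_n(X)`. -/
def Fn {d : ℕ} {A : Type*} [TopologicalSpace A] (X : Set (Config d A)) (n : ℕ) :
    Set (↥X ≃ₜ ↥X) :=
  {φ | (∀ x : ↥X, ∀ k : Fin d → ℤ, n < normInf k → (φ x).1 k = x.1 k) ∧
    ∀ x y : ↥X,
      ((∀ k : Fin d → ℤ, normInf k ≤ n → x.1 k = y.1 k) ↔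
        (∀ k : Fin d → ℤ, normInf k ≤ n → (φ x).1 k = (φ y).1 k))}

/-- The configuration `ω x_{Λ^c}`: equal to `ω` on `Λ` and to `x` off `Λ`. -/
def patch {d : ℕ} {A : Type*} (Λ : Finset (Fin d → ℤ)) (ω : {k // k ∈ Λ} → A)
    (x : Config d A) : Config d A :=
  fun k => if h : k ∈ Λ then ω ⟨k, h⟩ else x k

/-- `f_n = Σ_{i ∈ Λ_n} f ∘ T^i`. -/
noncomputable def fnSum (d : ℕ) {A : Type*} (f : Config d A → ℝ) (n : ℕ)
    (z : Config d A) : ℝ :=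
  ∑ i ∈ boxF d n, f (shift i z)

/-- The σ-algebra `𝓕_Δ` on `X`, generated by the coordinate projections `x ↦ x_i`, `i ∈ Δ`. -/
def cylSigma {d : ℕ} {A : Type*} [MeasurableSpace A] (X : Set (Config d A))
    (Δ : Set (Fin d → ℤ)) : MeasurableSpace ↥X :=
  MeasurableSpace.comap (fun (x : ↥X) (i : ↥Δ) => x.1 i.1) MeasurableSpace.pi

/-- `μ` is a Gibbs measure for `f`: `(φ_f, 𝔗)`-conformal. -/
def IsGibbs (d : ℕ) {A : Type*} [MeasurableSpace A] (X : Set (Config d A))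
    (f : Config d A → ℝ) (μ : Measure ↥X) : Prop :=
  ∀ V W : ↥X → ↥X, Measurable V → Measurable W →
    (∀ x, W (V x) = x) → (∀ x, V (W x) = x) →
    (∀ x : ↥X, ((x.1, (V x).1) ∈ gibbsRel X)) →
    (Measure.map V μ ≪ μ ∧
      ∀ᵐ x ∂μ, (Measure.map V μ).rnDeriv μ x
        = ENNReal.ofReal (Real.exp (phiF f x.1 (W x).1)))

/-- `μ` is a topological Gibbs measure for `f`: `(φ_f|_{𝔗⁰}, 𝔗⁰)`-conformal. -/
def IsTopGibbs (d : ℕ) {A : Type*} [TopologicalSpace A] [MeasurableSpace A]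
    (X : Set (Config d A)) (f : Config d A → ℝ) (μ : Measure ↥X) : Prop :=
  ∀ φ : ↥X ≃ₜ ↥X, memF X φ →
    (Measure.map (⇑φ) μ ≪ μ ∧
      ∀ᵐ x ∂μ, (Measure.map (⇑φ) μ).rnDeriv μ x
        = ENNReal.ofReal (Real.exp (phiF f x.1 (φ.symm x).1)))

/-- Finite-volume Gibbsian ratios defining the kernel `γ_Λ`. -/
noncomputable def gammaFn (d : ℕ) {A : Type*} [Fintype A] (X : Set (Config d A))
    (f : Config d A → ℝ) (Λ : Finset (Fin d → ℤ)) (S : Set ↥X) (x : Config d A)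
    (n : ℕ) : ℝ :=
  (∑ ω : {k // k ∈ Λ} → A,
      (Subtype.val '' S).indicator (fun z => Real.exp (fnSum d f n z)) (patch Λ ω x)) /
  (∑ η : {k // k ∈ Λ} → A,
      X.indicator (fun z => Real.exp (fnSum d f n z)) (patch Λ η x))

/-- The kernel `γ_Λ(S | x)`, defined as the limit of the finite-volume ratios. -/
noncomputable def gamma (d : ℕ) {A : Type*} [Fintype A] (X : Set (Config d A))
    (f : Config d A → ℝ) (Λ : Finset (Fin d → ℤ)) (S : Set ↥X) (x : Config d A) : ℝ :=
  limUnder atTop (gammaFn d X f Λ S x)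

/-- `X` is a subshift of finite type. -/
def IsSFT {d : ℕ} {A : Type*} (X : Set (Config d A)) : Prop :=
  ∃ n : ℕ, 1 ≤ n ∧ ∃ F : Set ({k : Fin d → ℤ // normInf k ≤ n} → A),
    X = {x : Config d A |
      ∀ l : Fin d → ℤ, (fun k : {k : Fin d → ℤ // normInf k ≤ n} => shift l x k.1) ∉ F}

/-- The topological Gibbs relation `𝔗⁰`. -/
def topGibbsRel {d : ℕ} {A : Type*} [TopologicalSpace A] (X : Set (Config d A)) :
    Set (Config d A × Config d A) :=
  {p | ∃ (hx : p.1 ∈ X) (φ : ↥X ≃ₜ ↥X), memF X φ ∧ (φ ⟨p.1, hx⟩).1 = p.2}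

/-- `f` is a local function on `X`. -/
def IsLocal {d : ℕ} {A : Type*} (X : Set (Config d A)) (f : Config d A → ℝ) : Prop :=
  ∃ Λ : Finset (Fin d → ℤ), ∀ x ∈ X, ∀ y ∈ X, (∀ k ∈ Λ, x k = y k) → f x = f y

/-! For `y, z ∈ X` differing only on `Λ`, the difference `f (T^k z) - f (T^k y)` is at most
`δ_{m-1}(f)` where `m` is the `ℓ∞`-distance from `k` to `Λ`. Spheres of radius `m` in `ℤ^d` have
`O(m^{d-1})` points, so the `SV_d` condition makes these differences absolutely summable and
`f_n(z) - f_n(y) → φ_f(y, z)` along the boxes. Dividing numerator and denominator by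
`e^{f_n(ω x_{Λ^c})}` turns the ratio into the reciprocal of a finite sum whose terms converge to
`e^{φ_f(ω x_{Λ^c}, η x_{Λ^c})} 1{η x_{Λ^c} ∈ X}`; the `η = ω` term is `1`, so the limit is positive. -/

section Box

variable {d : ℕ}

lemma normInf_le_iff {k : Fin d → ℤ} {n : ℕ} : normInf k ≤ n ↔ ∀ i, (k i).natAbs ≤ n := by
  simp [normInf, Finset.sup_le_iff]

lemma mem_boxF {N : ℕ} {k : Fin d → ℤ} : k ∈ boxF d N ↔ normInf k ≤ N := by
  simp only [boxF, Finset.mem_Icc, Pi.le_def, normInf_le_iff, ← forall_and]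
  exact forall_congr' fun i => by omega

lemma boxF_mono : Monotone (boxF d) := fun _ _ hmn _ hk =>
  mem_boxF.2 ((mem_boxF.1 hk).trans hmn)

lemma card_boxF (N : ℕ) : (boxF d N).card = (2 * N + 1) ^ d := by
  rw [boxF, Pi.card_Icc]
  simp only [Int.card_Icc, show ((N : ℤ) + 1 - -(N : ℤ)).toNat = 2 * N + 1 by omega]
  simp

lemma normInf_zero : normInf (0 : Fin d → ℤ) = 0 :=
  Nat.le_zero.1 (normInf_le_iff.2 fun i => by simp)

lemma boxF_zero : boxF d 0 = {0} := by
  norm_num [boxF, Finset.Icc_self]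
  rfl

lemma sum_boxF_comp_normInf (g : ℕ → ℝ) (M : ℕ) :
    ∑ v ∈ boxF d M, g (normInf v)
      = g 0 + ∑ m ∈ Finset.range M, (((2 * m + 3 : ℝ)) ^ d - (2 * m + 1) ^ d) * g (m + 1) := by
  induction M with
  | zero => simp [boxF_zero, normInf_zero]
  | succ M ih =>
    have hsub : boxF d M ⊆ boxF d (M + 1) := boxF_mono M.le_succ
    have hshell : ∀ v ∈ boxF d (M + 1) \ boxF d M, g (normInf v) = g (M + 1) := by
      intro v hv
      rw [Finset.mem_sdiff, mem_boxF, mem_boxF] at hv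
      congr 1
      omega
    rw [← Finset.sum_sdiff hsub, ih, Finset.sum_congr rfl hshell, Finset.sum_const,
      Finset.card_sdiff_of_subset hsub, nsmul_eq_mul, Nat.cast_sub (Finset.card_le_card hsub),
      card_boxF, card_boxF, Finset.sum_range_succ]
    push_cast
    ring

lemma add_three_pow_sub_add_one_pow_le (m : ℕ) :
    ((2 * m + 3 : ℝ)) ^ d - (2 * m + 1) ^ d ≤ 2 * d * 3 ^ (d - 1) * ((m : ℝ) + 1) ^ (d - 1) := by
  have hm : (0 : ℝ) ≤ m := m.cast_nonneg
  calc ((2 * m + 3 : ℝ)) ^ d - (2 * m + 1) ^ d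
      ≤ |(2 * m + 3 : ℝ) - (2 * m + 1)| * d * max |(2 * m + 3 : ℝ)| |2 * m + 1| ^ (d - 1) :=
        (le_abs_self _).trans (abs_pow_sub_pow_le _ _ _)
    _ = 2 * d * (2 * m + 3) ^ (d - 1) := by
        rw [show (2 * m + 3 : ℝ) - (2 * m + 1) = 2 by ring, abs_two,
          abs_of_pos (by positivity : (0 : ℝ) < 2 * m + 3),
          abs_of_pos (by positivity : (0 : ℝ) < 2 * m + 1), max_eq_left (by linarith)]
    _ ≤ 2 * d * (3 * ((m : ℝ) + 1)) ^ (d - 1) := by gcongr; linarith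
    _ = 2 * d * 3 ^ (d - 1) * ((m : ℝ) + 1) ^ (d - 1) := by rw [mul_pow]; ring

lemma summable_comp_normInf {g : ℕ → ℝ} (hg : ∀ m, 0 ≤ g m)
    (h : Summable fun m : ℕ => ((m : ℝ) + 1) ^ (d - 1) * g (m + 1)) :
    Summable fun v : Fin d → ℤ => g (normInf v) := by
  set K : ℝ := 2 * d * 3 ^ (d - 1)
  refine summable_of_sum_le (c := g 0 + K * ∑' m : ℕ, ((m : ℝ) + 1) ^ (d - 1) * g (m + 1))
    (fun v => hg _) fun u => ?_
  have hu : u ⊆ boxF d (u.sup normInf) := fun v hv => mem_boxF.2 (Finset.le_sup hv)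
  calc ∑ v ∈ u, g (normInf v) ≤ ∑ v ∈ boxF d (u.sup normInf), g (normInf v) :=
        Finset.sum_le_sum_of_subset_of_nonneg hu fun _ _ _ => hg _
    _ = g 0 + ∑ m ∈ Finset.range (u.sup normInf),
          (((2 * m + 3 : ℝ)) ^ d - (2 * m + 1) ^ d) * g (m + 1) := sum_boxF_comp_normInf g _
    _ ≤ g 0 + ∑ m ∈ Finset.range (u.sup normInf), K * ((m : ℝ) + 1) ^ (d - 1) * g (m + 1) := by
        gcongr with m
        · exact hg _
        · exact add_three_pow_sub_add_one_pow_le m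
    _ ≤ g 0 + K * ∑' m : ℕ, ((m : ℝ) + 1) ^ (d - 1) * g (m + 1) := by
        simp_rw [mul_assoc]
        rw [← Finset.mul_sum]
        gcongr
        exact h.sum_le_tsum _ fun m _ => mul_nonneg (by positivity) (hg _)

end Box

section Variation

variable {d : ℕ} {A : Type*} {X : Set (Config d A)} {f : Config d A → ℝ}

lemma BoundedOn.abs_le_supNormOn (hf : BoundedOn X f) {x : Config d A} (hx : x ∈ X) :
    |f x| ≤ supNormOn X f := by
  obtain ⟨C, hC⟩ := hf
  exact le_csSup ⟨C, by rintro r ⟨y, hy, rfl⟩; exact hC y hy⟩ ⟨x, hx, rfl⟩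

lemma BoundedOn.abs_sub_le_deltaVar (hf : BoundedOn X f) {n : ℕ} {x y : Config d A}
    (hx : x ∈ X) (hy : y ∈ X) (hxy : ∀ k : Fin d → ℤ, normInf k ≤ n → x k = y k) :
    |f x - f y| ≤ deltaVar X f n := by
  refine le_csSup ⟨2 * supNormOn X f, ?_⟩ ⟨x, hx, y, hy, hxy, rfl⟩
  rintro r ⟨x, hx, y, hy, -, rfl⟩
  linarith [abs_sub (f x) (f y), hf.abs_le_supNormOn hx, hf.abs_le_supNormOn hy]

noncomputable def variationMajorant (X : Set (Config d A)) (f : Config d A → ℝ) : ℕ → ℝ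
  | 0 => 2 * supNormOn X f
  | m + 1 => deltaVar X f m

lemma BoundedOn.abs_sub_le_variationMajorant (hf : BoundedOn X f) {m : ℕ} {x y : Config d A}
    (hx : x ∈ X) (hy : y ∈ X) (hxy : ∀ k : Fin d → ℤ, normInf k < m → x k = y k) :
    |f x - f y| ≤ variationMajorant X f m := by
  cases m with
  | zero =>
    show |f x - f y| ≤ 2 * supNormOn X f
    linarith [abs_sub (f x) (f y), hf.abs_le_supNormOn hx, hf.abs_le_supNormOn hy]
  | succ m => exact hf.abs_sub_le_deltaVar hx hy fun k hk => hxy k (Nat.lt_succ_of_le hk)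

lemma BoundedOn.variationMajorant_nonneg (hf : BoundedOn X f) (hX : X.Nonempty) (m : ℕ) :
    0 ≤ variationMajorant X f m := by
  obtain ⟨x, hx⟩ := hX
  exact (abs_nonneg _).trans (hf.abs_sub_le_variationMajorant (m := m) hx hx fun _ _ => rfl)

lemma MemSV.summable_variationMajorant (hf : MemSV d X f) (hX : X.Nonempty) :
    Summable fun m : ℕ => ((m : ℝ) + 1) ^ (d - 1) * variationMajorant X f (m + 1) := by
  refine (summable_nat_add_iff 1).1 <| Summable.of_nonneg_of_le
    (fun m => mul_nonneg (by positivity) (hf.1.variationMajorant_nonneg hX _)) (fun m => ?_)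
    (hf.2.mul_left (2 ^ (d - 1)))
  have hδ : 0 ≤ deltaVar X f (m + 1) := hf.1.variationMajorant_nonneg hX (m + 2)
  calc (((m + 1 : ℕ) : ℝ) + 1) ^ (d - 1) * deltaVar X f (m + 1)
      ≤ (2 * ((m : ℝ) + 1)) ^ (d - 1) * deltaVar X f (m + 1) := by
        gcongr; push_cast; linarith [m.cast_nonneg (α := ℝ)]
    _ = 2 ^ (d - 1) * (((m : ℝ) + 1) ^ (d - 1) * deltaVar X f (m + 1)) := by rw [mul_pow]; ring

end Variation

section Cocycle

variable {d : ℕ} {A : Type*} {X : Set (Config d A)} {f : Config d A → ℝ}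
  {Λ : Finset (Fin d → ℤ)} {y z : Config d A}

lemma BoundedOn.abs_sub_shift_le (hf : BoundedOn X f)
    (hinv : ∀ k : Fin d → ℤ, ∀ x ∈ X, shift k x ∈ X)
    (hy : y ∈ X) (hz : z ∈ X) (hyz : ∀ k ∉ Λ, y k = z k) (k : Fin d → ℤ) :
    |f (shift k z) - f (shift k y)| ≤ ∑ i ∈ Λ, variationMajorant X f (normInf (i - k)) := by
  rcases Λ.eq_empty_or_nonempty with rfl | hΛ
  · simp [show z = y from funext fun j => (hyz j (Finset.notMem_empty j)).symm]
  obtain ⟨i₀, hi₀, hmin⟩ := Λ.exists_min_image (fun i => normInf (i - k)) hΛ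
  have hagree : ∀ j, normInf j < normInf (i₀ - k) → shift k z j = shift k y j := by
    intro j hj
    refine (hyz (j + k) fun hjk => ?_).symm
    have := hmin _ hjk
    rw [add_sub_cancel_right] at this
    omega
  calc |f (shift k z) - f (shift k y)| ≤ variationMajorant X f (normInf (i₀ - k)) :=
        hf.abs_sub_le_variationMajorant (hinv k z hz) (hinv k y hy) hagree
    _ ≤ ∑ i ∈ Λ, variationMajorant X f (normInf (i - k)) :=
        Finset.single_le_sum (f := fun i => variationMajorant X f (normInf (i - k)))
          (fun i _ => hf.variationMajorant_nonneg ⟨y, hy⟩ _) hi₀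

lemma MemSV.summable_shift_sub (hf : MemSV d X f)
    (hinv : ∀ k : Fin d → ℤ, ∀ x ∈ X, shift k x ∈ X)
    (hy : y ∈ X) (hz : z ∈ X) (hyz : ∀ k ∉ Λ, y k = z k) :
    Summable fun k : Fin d → ℤ => f (shift k z) - f (shift k y) := by
  have hradial : Summable fun v : Fin d → ℤ => variationMajorant X f (normInf v) :=
    summable_comp_normInf (hf.1.variationMajorant_nonneg ⟨y, hy⟩)
      (hf.summable_variationMajorant ⟨y, hy⟩)
  refine summable_abs_iff.1 <| Summable.of_nonneg_of_le (fun k => abs_nonneg _)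
    (hf.1.abs_sub_shift_le hinv hy hz hyz) ?_
  exact summable_sum fun i _ => hradial.comp_injective sub_right_injective

lemma MemSV.tendsto_fnSum_sub (hf : MemSV d X f)
    (hinv : ∀ k : Fin d → ℤ, ∀ x ∈ X, shift k x ∈ X)
    (hy : y ∈ X) (hz : z ∈ X) (hyz : ∀ k ∉ Λ, y k = z k) :
    Tendsto (fun n => fnSum d f n z - fnSum d f n y) atTop (𝓝 (phiF f y z)) := by
  have hboxes : Tendsto (boxF d) atTop atTop :=
    tendsto_atTop_finset_of_monotone boxF_mono fun k => ⟨normInf k, mem_boxF.2 le_rfl⟩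
  simpa [fnSum, Function.comp_def, Finset.sum_sub_distrib, phiF] using
    (hf.summable_shift_sub hinv hy hz hyz).hasSum.comp hboxes

lemma MemSV.tendsto_indicator_exp_fnSum_div (hf : MemSV d X f)
    (hinv : ∀ k : Fin d → ℤ, ∀ x ∈ X, shift k x ∈ X)
    (hy : y ∈ X) (hyz : ∀ k ∉ Λ, y k = z k) :
    Tendsto (fun n => X.indicator (fun w => Real.exp (fnSum d f n w)) z /
        X.indicator (fun w => Real.exp (fnSum d f n w)) y) atTop
      (𝓝 (X.indicator (fun w => Real.exp (phiF f y w)) z)) := by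
  by_cases hz : z ∈ X
  · simp only [Set.indicator_of_mem hz, Set.indicator_of_mem hy, ← Real.exp_sub]
    exact (Real.continuous_exp.tendsto _).comp (hf.tendsto_fnSum_sub hinv hy hz hyz)
  · simpa only [Set.indicator_of_notMem hz, zero_div] using tendsto_const_nhds

end Cocycle

lemma tendsto_div_sum_of_tendsto_div {ι α : Type*} [Fintype ι] {l : Filter α}
    {a : α → ι → ℝ} {c : ι → ℝ} (i₀ : ι) (h : ∀ i, Tendsto (fun n => a n i / a n i₀) l (𝓝 (c i)))
    (hc : ∑ i, c i ≠ 0) :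
    Tendsto (fun n => a n i₀ / ∑ i, a n i) l (𝓝 (∑ i, c i)⁻¹) := by
  simpa only [← Finset.sum_div, inv_div] using (tendsto_finsetSum _ fun i _ => h i).inv₀ hc

lemma patch_apply_of_notMem {d : ℕ} {A : Type*} {Λ : Finset (Fin d → ℤ)} (ω : {k // k ∈ Λ} → A)
    (x : Config d A) {k : Fin d → ℤ} (hk : k ∉ Λ) : patch Λ ω x k = x k := by
  simp [patch, hk]

theorem gamma_limit_exists_general {d : ℕ} {A : Type*} [Fintype A]
    (X : Set (Config d A))
    (hinv : ∀ k : Fin d → ℤ, ∀ x ∈ X, shift k x ∈ X)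
    (f : Config d A → ℝ) (hf : MemSV d X f)
    (Λ : Finset (Fin d → ℤ))
    (ω : {k // k ∈ Λ} → A) (x : Config d A) :
    ∃ L : ℝ, 0 ≤ L ∧
      Tendsto (fun n : ℕ =>
          X.indicator (fun z => Real.exp (fnSum d f n z)) (patch Λ ω x) /
            ∑ η : {k // k ∈ Λ} → A,
              X.indicator (fun z => Real.exp (fnSum d f n z)) (patch Λ η x))
        atTop (nhds L) ∧
      (patch Λ ω x ∉ X → L = 0) ∧
      (patch Λ ω x ∈ X →
        L = 1 / (∑ η : {k // k ∈ Λ} → A,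
            X.indicator (fun z => Real.exp (phiF f (patch Λ ω x) z)) (patch Λ η x)) ∧
        0 < L) := by
  by_cases hωX : patch Λ ω x ∈ X
  · set S := ∑ η : {k // k ∈ Λ} → A,
      X.indicator (fun z => Real.exp (phiF f (patch Λ ω x) z)) (patch Λ η x)
    have hS : 1 ≤ S := by
      have hself : X.indicator (fun z => Real.exp (phiF f (patch Λ ω x) z)) (patch Λ ω x) = 1 := by
        simp [Set.indicator_of_mem hωX, phiF]
      exact hself ▸ Finset.single_le_sum (f := fun η =>
        X.indicator (fun z => Real.exp (phiF f (patch Λ ω x) z)) (patch Λ η x))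
        (fun η _ => Set.indicator_nonneg (fun z _ => (Real.exp_pos _).le) _) (Finset.mem_univ ω)
    have hlim := tendsto_div_sum_of_tendsto_div
      (a := fun n η => X.indicator (fun z => Real.exp (fnSum d f n z)) (patch Λ η x)) ω
      (fun η => hf.tendsto_indicator_exp_fnSum_div hinv hωX fun k hk =>
        (patch_apply_of_notMem ω x hk).trans (patch_apply_of_notMem η x hk).symm)
      (zero_lt_one.trans_le hS).ne'
    exact ⟨S⁻¹, by positivity, hlim, (absurd hωX ·), fun _ => ⟨(one_div S).symm, by positivity⟩⟩
  · refine ⟨0, le_rfl, ?_, fun _ => rfl, (absurd · hωX)⟩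
    simpa only [Set.indicator_of_notMem hωX, zero_div] using tendsto_const_nhds

/-- For `f ∈ SV_d(X)`, a nonempty finite `Λ`, `ω ∈ 𝒜^Λ` and `x ∈ X`,
the limit of `e^{f_n(ω x_{Λ^c})} 1{ω x_{Λ^c} ∈ X} / Σ_η e^{f_n(η x_{Λ^c})} 1{η x_{Λ^c} ∈ X}`
exists and is a nonnegative real number; it is `0` when `ω x_{Λ^c} ∉ X`, and equals
`1 / Σ_η e^{φ_f(ω x_{Λ^c}, η x_{Λ^c})} 1{η x_{Λ^c} ∈ X} > 0` when `ω x_{Λ^c} ∈ X`. -/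
theorem gamma_limit_exists {d : ℕ} (hd : 1 ≤ d) {A : Type*} [Fintype A] [Nonempty A]
    [TopologicalSpace A] [DiscreteTopology A]
    (X : Set (Config d A)) (hne : X.Nonempty) (hcl : IsClosed X)
    (hinv : ∀ k : Fin d → ℤ, ∀ x ∈ X, shift k x ∈ X)
    (f : Config d A → ℝ) (hf : MemSV d X f)
    (Λ : Finset (Fin d → ℤ)) (hΛ : Λ.Nonempty)
    (ω : {k // k ∈ Λ} → A) (x : Config d A) (hx : x ∈ X) :
    ∃ L : ℝ, 0 ≤ L ∧
      Tendsto (fun n : ℕ =>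
          X.indicator (fun z => Real.exp (fnSum d f n z)) (patch Λ ω x) /
            ∑ η : {k // k ∈ Λ} → A,
              X.indicator (fun z => Real.exp (fnSum d f n z)) (patch Λ η x))
        atTop (nhds L) ∧
      (patch Λ ω x ∉ X → L = 0) ∧
      (patch Λ ω x ∈ X →
        L = 1 / (∑ η : {k // k ∈ Λ} → A,
            X.indicator (fun z => Real.exp (phiF f (patch Λ ω x) z)) (patch Λ η x)) ∧
        0 < L) :=
  gamma_limit_exists_general X hinv f hf Λ ω x
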